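/- The cylindric analogues of the Macdonald coefficient functions satisfy Ψ'_{λ'/d/μ'}(t) = (b_λ(t)/b_μ(t)) Φ'_{λ'/d/μ'}(t), where Φ'_{λ'/d/μ'}(t) = ∏_{j=1}^n [μ'_j − μ'_{j+1} choose λ'[d]_{j+1} − μ'[0]_{j+1}]_t and Ψ'_{λ'/d/μ'}(t) = ∏_{j=1}^n [λ'_j − λ'_{j+1} choose λ'[d]_j − μ'[0]_j]_t. -/

import Mathlib

open Finset

/-- The Gaussian (t-)binomial coefficient `[m choose r]_t`, equal to
`(t;t)_m/((t;t)_r (t;t)_{m−r})` for `0 ≤ r ≤ m` and `0` otherwise. -/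
def gaussBinom {K : Type*} [CommRing K] (t : K) : ℕ → ℕ → K
  | _, 0 => 1
  | 0, _ + 1 => 0
  | m + 1, r + 1 => gaussBinom t m r + t ^ (r + 1) * gaussBinom t m (r + 1)

lemma gaussBinom_eq_zero {K : Type*} [CommRing K] (t : K) :
    ∀ m r : ℕ, m < r → gaussBinom t m r = 0 := by
  intro m
  induction m with
  | zero => intro r hr; match r, hr with | r+1, _ => rfl
  | succ m ih =>
    intro r hr
    match r, hr with
    | r+1, hr =>
      show gaussBinom t m r + t ^ (r + 1) * gaussBinom t m (r + 1) = 0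
      rw [ih r (by omega), ih (r+1) (by omega)]; ring

lemma gaussBinom_mul {K : Type*} [CommRing K] (t : K) :
    ∀ m r : ℕ, r ≤ m →
      gaussBinom t m r * ((∏ s ∈ Finset.range r, (1 - t ^ (s + 1))) *
        (∏ s ∈ Finset.range (m - r), (1 - t ^ (s + 1)))) =
      ∏ s ∈ Finset.range m, (1 - t ^ (s + 1)) := by
  intro m
  induction m with
  | zero => intro r hr; interval_cases r; simp [gaussBinom]
  | succ m ih =>
    intro r hr
    match r with
    | 0 => show (1:K) * _ = _; simp
    | r+1 =>
      show (gaussBinom t m r + t ^ (r + 1) * gaussBinom t m (r + 1)) * _ = _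
      rcases eq_or_lt_of_le hr with h | h
      · -- r + 1 = m + 1, i.e. r = m
        have hrm : r = m := by omega
        subst hrm
        rw [gaussBinom_eq_zero t r (r+1) (by omega)]
        have h1 := ih r le_rfl
        simp only [Nat.sub_self, Finset.range_zero, Finset.prod_empty, mul_one] at h1 ⊢
        rw [Finset.prod_range_succ]
        linear_combination (1 - t ^ (r + 1)) * h1
      · -- r + 1 ≤ m
        have hrm : r + 1 ≤ m := by omega
        have h1 := ih r (by omega)
        have h2 := ih (r+1) hrm
        have e1 : m + 1 - (r + 1) = m - r := by omega
        have e2 : m - r = (m - (r+1)) + 1 := by omega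
        have e3 : (m - (r+1)) + 1 = m - r := by omega
        have e4 : t ^ (r + 1) * t ^ (m - r) = t ^ (m + 1) := by
          rw [← pow_add]; congr 1; omega
        rw [e1, Finset.prod_range_succ (n := m),
          Finset.prod_range_succ (n := r)] at *
        rw [e2, Finset.prod_range_succ] at h1 ⊢
        rw [e3] at h1 ⊢
        linear_combination (1 - t ^ (r + 1)) * h1 + t ^ (r+1) * (1 - t ^ (m - r)) * h2 +
          (-(∏ s ∈ Finset.range m, (1 - t ^ (s + 1)))) * e4

/-- For `λ, μ ∈ A⁺_{k,n}` and `λ'/d/μ'` a cylindric horizontal strip,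
the cylindric Macdonald coefficient functions satisfy
`Ψ'_{λ'/d/μ'}(t) = (b_λ(t)/b_μ(t)) Φ'_{λ'/d/μ'}(t)`, where
`Φ' = ∏_{j=1}^n [μ'_j − μ'_{j+1} choose λ'[d]_{j+1} − μ'[0]_{j+1}]_t` and
`Ψ' = ∏_{j=1}^n [λ'_j − λ'_{j+1} choose λ'[d]_j − μ'[0]_j]_t`, with
`λ'[d]_j = λ'_j + d` for `1 ≤ j ≤ n`, `λ'[d]_{n+1} = λ'[d]_1 − k = d`, and
`μ'[0]_{n+1} = μ'[0]_1 − k = 0`. -/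
theorem cylindric_macdonald_Phi'_Psi' {K : Type*} [Field K] (t : K)
    (ht : ∀ s : ℕ, 1 ≤ s → t ^ s ≠ 1)
    (k n d : ℕ) (hk : 0 < k) (hn : 0 < n)
    (lam mu : ℕ → ℕ)
    (hlamA : ∀ i j, 1 ≤ i → i ≤ j → j ≤ n + 1 → lam j ≤ lam i)
    (hmuA : ∀ i j, 1 ≤ i → i ≤ j → j ≤ n + 1 → mu j ≤ mu i)
    (hlam1 : lam 1 = k) (hmu1 : mu 1 = k)
    (hlamtop : lam (n + 1) = 0) (hmutop : mu (n + 1) = 0)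
    -- the cylindric loop `λ'[d]` and the loop `μ'[0]` (with the wrap at index `n+1`)
    (Ld M : ℕ → ℕ)
    (hLd : ∀ j, Ld j = if j = n + 1 then d else lam j + d)
    (hM : ∀ j, M j = if j = n + 1 then 0 else mu j)
    -- `λ'/d/μ'` is a cylindric horizontal strip: containment and interlacing
    (hcont : ∀ j, 1 ≤ j → j ≤ n + 1 → M j ≤ Ld j)
    (hinterlace : ∀ j, 1 ≤ j → j ≤ n → Ld (j + 1) ≤ M j)
    (poch : ℕ → K) (hpoch : ∀ m, poch m = ∏ s ∈ Finset.range m, (1 - t ^ (s + 1)))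
    (b : (ℕ → ℕ) → K)
    (hb : ∀ f, b f = ∏ i ∈ Finset.Icc 1 n, poch (f i - f (i + 1)))
    (Φ' Ψ' : K)
    (hΦ' : Φ' = ∏ j ∈ Finset.Icc 1 n,
      gaussBinom t (mu j - mu (j + 1)) (Ld (j + 1) - M (j + 1)))
    (hΨ' : Ψ' = ∏ j ∈ Finset.Icc 1 n,
      gaussBinom t (lam j - lam (j + 1)) (Ld j - M j)) :
    Ψ' = (b lam / b mu) * Φ' := by
  -- nonvanishing of the Pochhammer products
  have hpne : ∀ m : ℕ, poch m ≠ 0 := by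
    intro m
    rw [hpoch]
    refine Finset.prod_ne_zero_iff.mpr ?_
    intro s _ hz
    exact ht (s + 1) (by omega) (by linear_combination -hz)
  -- the q-binomial as a quotient
  have gauss_eq : ∀ m r : ℕ, r ≤ m →
      gaussBinom t m r = poch m / (poch r * poch (m - r)) := by
    intro m r h
    rw [eq_div_iff (mul_ne_zero (hpne r) (hpne (m - r)))]
    simp only [hpoch]
    exact gaussBinom_mul t m r h
  -- the loops are explicit on the relevant range
  have hLdj : ∀ j, 1 ≤ j → j ≤ n + 1 → Ld j = lam j + d := by
    intro j h1 h2
    rw [hLd]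
    split_ifs with h
    · rw [h, hlamtop]; omega
    · rfl
  have hMj : ∀ j, 1 ≤ j → j ≤ n + 1 → M j = mu j := by
    intro j h1 h2
    rw [hM]
    split_ifs with h
    · rw [h, hmutop]
    · rfl
  have hcont' : ∀ j, 1 ≤ j → j ≤ n + 1 → mu j ≤ lam j + d := by
    intro j h1 h2
    have := hcont j h1 h2
    rwa [hLdj j h1 h2, hMj j h1 h2] at this
  have hint' : ∀ j, 1 ≤ j → j ≤ n → lam (j + 1) + d ≤ mu j := by
    intro j h1 h2
    have := hinterlace j h1 h2
    rwa [hLdj (j + 1) (by omega) (by omega), hMj j h1 (by omega)] at this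
  -- rewrite Ψ' and Φ' termwise
  have hΨ2 : Ψ' = ∏ j ∈ Finset.Icc 1 n,
      (poch (lam j - lam (j + 1)) /
        (poch (lam j + d - mu j) * poch (mu j - (lam (j + 1) + d)))) := by
    rw [hΨ']
    refine Finset.prod_congr rfl ?_
    intro j hj
    simp only [Finset.mem_Icc] at hj
    have ha := hcont' j hj.1 (by omega)
    have hbd := hint' j hj.1 hj.2
    have hmono := hlamA j (j + 1) hj.1 (by omega) (by omega)
    have e1 : Ld j - M j = lam j + d - mu j := by
      rw [hLdj j hj.1 (by omega), hMj j hj.1 (by omega)]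
    have hle : lam j + d - mu j ≤ lam j - lam (j + 1) := by omega
    have e2 : lam j - lam (j + 1) - (lam j + d - mu j) = mu j - (lam (j + 1) + d) := by
      omega
    rw [e1, gauss_eq _ _ hle, e2]
  have hΦ2 : Φ' = ∏ j ∈ Finset.Icc 1 n,
      (poch (mu j - mu (j + 1)) /
        (poch (lam (j + 1) + d - mu (j + 1)) * poch (mu j - (lam (j + 1) + d)))) := by
    rw [hΦ']
    refine Finset.prod_congr rfl ?_
    intro j hj
    simp only [Finset.mem_Icc] at hj
    have ha := hcont' (j + 1) (by omega) (by omega)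
    have hbd := hint' j hj.1 hj.2
    have hmono := hmuA j (j + 1) hj.1 (by omega) (by omega)
    have e1 : Ld (j + 1) - M (j + 1) = lam (j + 1) + d - mu (j + 1) := by
      rw [hLdj (j + 1) (by omega) (by omega), hMj (j + 1) (by omega) (by omega)]
    have hle : lam (j + 1) + d - mu (j + 1) ≤ mu j - mu (j + 1) := by omega
    have e2 : mu j - mu (j + 1) - (lam (j + 1) + d - mu (j + 1)) =
        mu j - (lam (j + 1) + d) := by omega
    rw [e1, gauss_eq _ _ hle, e2]
  -- package the products
  set PA := ∏ j ∈ Finset.Icc 1 n, poch (lam j + d - mu j) with hPA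
  set PC := ∏ j ∈ Finset.Icc 1 n, poch (lam (j + 1) + d - mu (j + 1)) with hPC
  set PS := ∏ j ∈ Finset.Icc 1 n, poch (mu j - (lam (j + 1) + d)) with hPS
  have hΨ3 : Ψ' = b lam / (PA * PS) := by
    rw [hΨ2, Finset.prod_div_distrib, Finset.prod_mul_distrib, hb]
  have hΦ3 : Φ' = b mu / (PC * PS) := by
    rw [hΦ2, Finset.prod_div_distrib, Finset.prod_mul_distrib, hb]
  -- the key telescoping identity PA = PC
  have h3 : PA = PC := by
    have hg1 : poch (lam 1 + d - mu 1) = poch d := by rw [hlam1, hmu1]; congr 1; omega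
    have hgn : poch (lam (n + 1) + d - mu (n + 1)) = poch d := by
      rw [hlamtop, hmutop]; congr 1; omega
    have hA : PA = ∏ i ∈ Finset.range n, poch (lam (1 + i) + d - mu (1 + i)) := by
      rw [hPA, ← Finset.Ico_add_one_right_eq_Icc, Finset.prod_Ico_eq_prod_range]
      simp
    have hC : PC = ∏ i ∈ Finset.range n, poch (lam (1 + i + 1) + d - mu (1 + i + 1)) := by
      rw [hPC, ← Finset.Ico_add_one_right_eq_Icc, Finset.prod_Ico_eq_prod_range]
      simp
    have key : (∏ i ∈ Finset.range n, poch (lam (1 + i + 1) + d - mu (1 + i + 1))) *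
        poch d = (∏ i ∈ Finset.range n, poch (lam (1 + i) + d - mu (1 + i))) * poch d := by
      have e1 := Finset.prod_range_succ' (fun i => poch (lam (1 + i) + d - mu (1 + i))) n
      have e2 := Finset.prod_range_succ (fun i => poch (lam (1 + i) + d - mu (1 + i))) n
      have : 1 + n = n + 1 := by omega
      rw [this] at e2
      calc (∏ i ∈ Finset.range n, poch (lam (1 + i + 1) + d - mu (1 + i + 1))) * poch d
          = (∏ i ∈ Finset.range n, poch (lam (1 + (i + 1)) + d - mu (1 + (i + 1)))) *
            poch (lam (1 + 0) + d - mu (1 + 0)) := by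
            rw [show lam (1 + 0) + d - mu (1 + 0) = lam 1 + d - mu 1 from by congr 2 <;> omega, hg1]
            simp only [show ∀ i : ℕ, 1 + i + 1 = 1 + (i + 1) from fun i => by omega]
        _ = ∏ i ∈ Finset.range (n + 1), poch (lam (1 + i) + d - mu (1 + i)) := e1.symm
        _ = (∏ i ∈ Finset.range n, poch (lam (1 + i) + d - mu (1 + i))) *
            poch (lam (n + 1) + d - mu (n + 1)) := e2
        _ = _ := by rw [hgn]
    rw [hA, hC]
    exact (mul_right_cancel₀ (hpne d) key).symm
  -- finish
  have hbne : ∀ f : ℕ → ℕ, b f ≠ 0 := by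
    intro f
    rw [hb]
    exact Finset.prod_ne_zero_iff.mpr fun i _ => hpne _
  have hPCne : PC ≠ 0 := Finset.prod_ne_zero_iff.mpr fun i _ => hpne _
  have hPSne : PS ≠ 0 := Finset.prod_ne_zero_iff.mpr fun i _ => hpne _
  rw [hΨ3, hΦ3, h3, div_mul_div_comm, mul_comm (b lam) (b mu),
    mul_div_mul_left _ _ (hbne mu)]
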